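/- Let F ∈ ℝ^{m×n}, m < n, and suppose that for a nonnegative s-sparse vector x₀ ≥ 0 with ||x₀||_0 = s, the set {x ≥ 0 : Fx = Fx₀} equals {x₀}. If this uniqueness holds for every nonnegative s-sparse x₀, then m ≥ 2s + 1. -/
import Mathlib

/-- Auxiliary lemma: if `h` is a nonzero kernel vector whose negative part has
support of size at most `s`, then the uniqueness hypothesis fails. -/
lemma nonneg_sparse_aux
    {m n s : ℕ} (F : Matrix (Fin m) (Fin n) ℝ) (hs : s ≤ n)
    (huniq : ∀ x₀ : Fin n → ℝ, (∀ i, 0 ≤ x₀ i) →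
      (Finset.univ.filter (fun i => x₀ i ≠ 0)).card = s →
      ∀ x : Fin n → ℝ, (∀ i, 0 ≤ x i) →
        F.mulVec x = F.mulVec x₀ → x = x₀)
    (h : Fin n → ℝ) (hker : F.mulVec h = 0) (hne : h ≠ 0)
    (hN : (Finset.univ.filter (fun i => h i < 0)).card ≤ s) : False := by
  classical
  set N : Finset (Fin n) := Finset.univ.filter (fun i => h i < 0) with hNdef
  have hcompl : s - N.card ≤ (Finset.univ \ N).card := by
    rw [Finset.card_sdiff_of_subset (Finset.subset_univ N), Finset.card_univ, Fintype.card_fin]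
    omega
  obtain ⟨E, hEsub, hEcard⟩ := Finset.exists_subset_card_eq hcompl
  set x₀ : Fin n → ℝ := fun i => max (-h i) 0 + (if i ∈ E then 1 else 0) with hx₀def
  have hx₀nn : ∀ i, 0 ≤ x₀ i := by
    intro i
    apply add_nonneg (le_max_right _ _)
    split <;> norm_num
  have hEdisj : Disjoint N E := by
    refine Finset.disjoint_left.mpr ?_
    intro a haN haE
    exact (Finset.mem_sdiff.mp (hEsub haE)).2 haN
  have hsupp : Finset.univ.filter (fun i => x₀ i ≠ 0) = N ∪ E := by
    ext i
    simp only [Finset.mem_filter, Finset.mem_univ, true_and, Finset.mem_union, hNdef,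
      hx₀def]
    constructor
    · intro hi
      by_contra hcon
      push_neg at hcon
      obtain ⟨h1, h2⟩ := hcon
      apply hi
      rw [if_neg h2, max_eq_right (by linarith), add_zero]
    · intro hi
      rcases hi with hi | hi
      · have h1 : (0:ℝ) < max (-h i) 0 := lt_max_of_lt_left (by linarith)
        have h2 : (0:ℝ) ≤ if i ∈ E then 1 else 0 := by split <;> norm_num
        positivity
      · have h1 : (0:ℝ) ≤ max (-h i) 0 := le_max_right _ _
        rw [if_pos hi]
        positivity
  have hcard : (Finset.univ.filter (fun i => x₀ i ≠ 0)).card = s := by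
    rw [hsupp, Finset.card_union_of_disjoint hEdisj, hEcard]
    omega
  set x : Fin n → ℝ := fun i => x₀ i + h i with hxdef
  have hxnn : ∀ i, 0 ≤ x i := by
    intro i
    simp only [hxdef, hx₀def]
    rcases lt_or_ge (h i) 0 with hi | hi
    · rw [max_eq_left (by linarith)]
      have : (0:ℝ) ≤ if i ∈ E then 1 else 0 := by split <;> norm_num
      linarith
    · have h1 : (0:ℝ) ≤ max (-h i) 0 := le_max_right _ _
      have h2 : (0:ℝ) ≤ if i ∈ E then 1 else 0 := by split <;> norm_num
      linarith
  have hFx : F.mulVec x = F.mulVec x₀ := by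
    have : x = x₀ + h := rfl
    rw [this, Matrix.mulVec_add, hker, add_zero]
  have hxeq := huniq x₀ hx₀nn hcard x hxnn hFx
  apply hne
  funext i
  rw [Pi.zero_apply]
  have h2 := congrFun hxeq i
  simp only [hxdef] at h2
  linarith

/-- Nonnegative-sparse uniqueness bound: if for every nonnegative `s`-sparse
`x₀` the set `{x ≥ 0 : Fx = Fx₀}` is the singleton `{x₀}`, and `m < n`,
then `m ≥ 2s + 1`. -/
theorem nonneg_sparse_uniqueness_bound
    {m n s : ℕ} (F : Matrix (Fin m) (Fin n) ℝ)
    (hmn : m < n) (hs : s ≤ n)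
    (huniq : ∀ x₀ : Fin n → ℝ, (∀ i, 0 ≤ x₀ i) →
      (Finset.univ.filter (fun i => x₀ i ≠ 0)).card = s →
      ∀ x : Fin n → ℝ, (∀ i, 0 ≤ x i) →
        F.mulVec x = F.mulVec x₀ → x = x₀) :
    2 * s + 1 ≤ m := by
  classical
  by_contra hcon
  push_neg at hcon
  have hm2s : m ≤ 2 * s := by omega
  have hm1n : m + 1 ≤ n := hmn
  set emb : Fin (m + 1) → Fin n := Fin.castLE hm1n with hembdef
  have hembinj : Function.Injective emb := Fin.castLE_injective _
  set G : Matrix (Fin m) (Fin (m + 1)) ℝ := F.submatrix id emb with hGdef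
  -- G.mulVecLin is not injective (m+1 > m)
  have hninj : ¬ Function.Injective G.mulVecLin := by
    intro hinj
    have := LinearMap.finrank_le_finrank_of_injective hinj
    simp only [Module.finrank_fin_fun] at this
    omega
  rw [← LinearMap.ker_eq_bot] at hninj
  obtain ⟨y, hy, hyne⟩ := (Submodule.ne_bot_iff _).mp hninj
  rw [LinearMap.mem_ker, Matrix.mulVecLin_apply] at hy
  have hy0 : G.mulVec y = 0 := hy
  -- extend y to a vector h on Fin n supported in the range of emb
  set h : Fin n → ℝ := fun i => ∑ j, if emb j = i then y j else 0 with hhdef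
  have hemb : ∀ j, h (emb j) = y j := by
    intro j
    have hrfl : h (emb j) = ∑ j', if emb j' = emb j then y j' else 0 := rfl
    rw [hrfl, Finset.sum_eq_single j]
    · simp
    · intro j' _ hj'
      rw [if_neg (fun hc => hj' (hembinj hc))]
    · intro hj; exact absurd (Finset.mem_univ j) hj
  have hzero : ∀ i : Fin n, (∀ j, emb j ≠ i) → h i = 0 := by
    intro i hi
    have hrfl : h i = ∑ j, if emb j = i then y j else 0 := rfl
    rw [hrfl]
    apply Finset.sum_eq_zero
    intro j _
    rw [if_neg (hi j)]
  have hFh : F.mulVec h = 0 := by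
    funext k
    have : F.mulVec h k = G.mulVec y k := by
      simp only [Matrix.mulVec, dotProduct, hhdef, hGdef, Matrix.submatrix_apply,
        id_eq, Finset.mul_sum]
      rw [Finset.sum_comm]
      apply Finset.sum_congr rfl
      intro j _
      rw [Finset.sum_eq_single (emb j)]
      · simp
      · intro i _ hi
        rw [if_neg (fun hc => hi hc.symm), mul_zero]
      · intro hj; exact absurd (Finset.mem_univ (emb j)) hj
    rw [this, hy0]
  have hne : h ≠ 0 := by
    intro hc
    apply hyne
    funext j
    have := congrFun hc (emb j)
    rw [hemb j] at this
    exact this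
  -- support of h is contained in the image of emb, hence has card ≤ m + 1
  set N : Finset (Fin n) := Finset.univ.filter (fun i => h i < 0) with hNdef
  set P : Finset (Fin n) := Finset.univ.filter (fun i => 0 < h i) with hPdef
  have hNP : N.card + P.card ≤ m + 1 := by
    have hdisj : Disjoint N P := by
      refine Finset.disjoint_left.mpr ?_
      intro a haN haP
      simp only [hNdef, hPdef, Finset.mem_filter, Finset.mem_univ, true_and] at haN haP
      linarith
    have hsub : N ∪ P ⊆ Finset.univ.image emb := by
      intro i hi
      simp only [Finset.mem_image, Finset.mem_univ, true_and]
      by_contra hc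
      push_neg at hc
      have := hzero i hc
      simp only [hNdef, hPdef, Finset.mem_union, Finset.mem_filter, Finset.mem_univ,
        true_and, this] at hi
      rcases hi with hi | hi <;> linarith
    calc N.card + P.card = (N ∪ P).card := (Finset.card_union_of_disjoint hdisj).symm
      _ ≤ (Finset.univ.image emb).card := Finset.card_le_card hsub
      _ ≤ Finset.univ.card := Finset.card_image_le
      _ = m + 1 := by simp
  -- one of N, P has card ≤ s
  rcases le_or_gt N.card s with hNs | hNs
  · exact nonneg_sparse_aux F hs huniq h hFh hne hNs
  · have hPs : P.card ≤ s := by omega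
    have hP' : (Finset.univ.filter (fun i => (-h) i < 0)).card ≤ s := by
      have : Finset.univ.filter (fun i => (-h) i < 0) = P := by
        ext i
        simp [hPdef]
      rw [this]; exact hPs
    have hker' : F.mulVec (-h) = 0 := by
      rw [Matrix.mulVec_neg, hFh, neg_zero]
    have hne' : (-h) ≠ 0 := by
      intro hc
      apply hne
      funext i
      have := congrFun hc i
      simp only [Pi.neg_apply, Pi.zero_apply, neg_eq_zero] at this
      exact this
    exact nonneg_sparse_aux F hs huniq (-h) hker' hne' hP'
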